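/- arXiv:1511.03998 — 2 statements merged into one kernel-verified Lean document; each statement's English description precedes it below -/
import Mathlib

section
/- For any N-qubit generalized W state, the LGGM under single-qubit projective measurement on any qubit r is at least the GGM of the original state: E_L^r ≥ min_i |a_i|². -/
open scoped BigOperators

noncomputable section

namespace QI

/-- A pure state of a collection of qubits indexed by `ι`, given by its
amplitudes in the computational basis. -/
abbrev PureState (ι : Type) := (ι → Fin 2) → ℂ

variable {ι : Type} [Fintype ι] [DecidableEq ι]

/-- Squared norm of a pure state. -/
def nsq (ψ : PureState ι) : ℝ := ∑ x, Complex.normSq (ψ x)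

/-- Normalization of a pure state. -/
def normalize (ψ : PureState ι) : PureState ι :=
  fun x => ψ x / (Real.sqrt (nsq ψ) : ℂ)

/-- Combine configurations of the qubits in `A` and outside `A`. -/
def merge (A : Finset ι) (a : {i // i ∈ A} → Fin 2) (b : {i // i ∉ A} → Fin 2) :
    ι → Fin 2 := fun i => if h : i ∈ A then a ⟨i, h⟩ else b ⟨i, h⟩

/-- Reduced density matrix of the qubits in `A`. -/
def rdm (ψ : PureState ι) (A : Finset ι) :
    ({i // i ∈ A} → Fin 2) → ({i // i ∈ A} → Fin 2) → ℂ :=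
  fun a a' => ∑ b : {i // i ∉ A} → Fin 2, ψ (merge A a b) * star (ψ (merge A a' b))

/-- Maximal eigenvalue of a (Hermitian) matrix, via the Rayleigh quotient. -/
def maxEig {κ : Type} [Fintype κ] (ρ : κ → κ → ℂ) : ℝ :=
  ⨆ v : {v : κ → ℂ // ∑ i, Complex.normSq (v i) = 1},
    (∑ i, ∑ j, star (v.1 i) * ρ i j * v.1 j).re

/-- The generalized geometric measure: one minus the maximal squared Schmidt
coefficient over all nonempty proper bipartitions. -/
def GGM (ψ : PureState ι) : ℝ :=
  1 - ⨆ A : {A : Finset ι // A.Nonempty ∧ A ≠ Finset.univ}, maxEig (rdm ψ A.1)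

/-- Unnormalized post-measurement state on the remaining qubits after obtaining
the outcome corresponding to the basis vector `ξ` in a rank-1 projective
measurement on qubit `r`. -/
def collapse (ψ : PureState ι) (r : ι) (ξ : Fin 2 → ℂ) :
    PureState {i // i ≠ r} :=
  fun b => ∑ v : Fin 2, ξ v * ψ (fun i => if h : i = r then v else b ⟨i, h⟩)

/-- First measurement-basis vector `cos(θ/2)|0⟩ + e^{iφ} sin(θ/2)|1⟩`. -/
def xiUp (θ φ : ℝ) : Fin 2 → ℂ :=
  ![(Real.cos (θ/2) : ℂ), Complex.exp (φ * Complex.I) * (Real.sin (θ/2) : ℂ)]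

/-- Second measurement-basis vector `-e^{-iφ} sin(θ/2)|0⟩ + cos(θ/2)|1⟩`. -/
def xiDn (θ φ : ℝ) : Fin 2 → ℂ :=
  ![-(Complex.exp (-(φ * Complex.I))) * (Real.sin (θ/2) : ℂ), (Real.cos (θ/2) : ℂ)]

/-- Average post-measurement GGM for the projective measurement `(θ, φ)` on
qubit `r`. -/
def avgGGM (ψ : PureState ι) (r : ι) (θ φ : ℝ) : ℝ :=
  nsq (collapse ψ r (xiUp θ φ)) * GGM (normalize (collapse ψ r (xiUp θ φ))) +
  nsq (collapse ψ r (xiDn θ φ)) * GGM (normalize (collapse ψ r (xiDn θ φ)))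

/-- The localizable generalized geometric measure for single-qubit projective
measurement on qubit `r`. -/
def LGGM (ψ : PureState ι) (r : ι) : ℝ :=
  sSup {E | ∃ θ ∈ Set.Icc 0 Real.pi, ∃ φ ∈ Set.Ico 0 (2 * Real.pi),
    E = avgGGM ψ r θ φ}

/-- The generalized GHZ state `a₁|0…0⟩ + a₂|1…1⟩`. -/
def ghz (a1 a2 : ℂ) : PureState ι :=
  fun x => if x = fun _ => 0 then a1 else if x = fun _ => 1 then a2 else 0

/-- Computational basis vector with a single `1` at position `i`. -/
def basisVec (i : ι) : ι → Fin 2 := fun j => if j = i then 1 else 0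

/-- The generalized W state `Σᵢ aᵢ |0…1ᵢ…0⟩`. -/
def wState (a : ι → ℂ) : PureState ι :=
  fun x => ∑ i, if x = basisVec i then a i else 0

/-- The Dicke state with `k` excitations: equal superposition of all
computational basis states with exactly `k` ones. -/
def dicke (k : ℕ) : PureState ι :=
  fun x => if (∑ i, ((x i : ℕ))) = k
    then ((1 / Real.sqrt ((Fintype.card ι).choose k) : ℝ) : ℂ) else 0


/-!
Measure qubit `r` in the computational basis (`θ = φ = 0`). The outcome `|1⟩` leaves a product
state, which contributes a nonnegative amount. The outcome `|0⟩` leaves, with weight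
`S = ∑_{i ≠ r} |aᵢ|²`, the W state of the other qubits. Across any cut `A | Aᶜ` a W state splits as
`|W_A⟩|0⟩ + |0⟩|W_{Aᶜ}⟩` with orthogonal pieces of weights `p + q = S`, so the largest eigenvalue
of its reduced density matrix is `max p q = S - min p q ≤ S - minᵢ |aᵢ|²`, both parts containing
some qubit. Hence this branch alone contributes at least `minᵢ |aᵢ|²` to the average GGM.
-/

open Finset Complex

theorem normSq_sum_mul_le {κ : Type} (s : Finset κ) (x y : κ → ℂ) :
    normSq (∑ i ∈ s, x i * y i) ≤ (∑ i ∈ s, normSq (x i)) * ∑ i ∈ s, normSq (y i) := by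
  simp only [normSq_eq_norm_sq]
  calc ‖∑ i ∈ s, x i * y i‖ ^ 2 ≤ (∑ i ∈ s, ‖x i‖ * ‖y i‖) ^ 2 := by
        gcongr
        exact (norm_sum_le _ _).trans_eq (by simp only [norm_mul])
    _ ≤ _ := sum_mul_sq_le_sq_mul_sq _ _ _

theorem normSq_sum_star_mul_le_of_apply_eq_zero {κ : Type} [Fintype κ] [DecidableEq κ]
    (v w : κ → ℂ) {k : κ} (hk : w k = 0) :
    normSq (∑ a, star (v a) * w a) ≤ (∑ a, normSq (v a) - normSq (v k)) * ∑ a, normSq (w a) := by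
  calc normSq (∑ a, star (v a) * w a) = normSq (∑ a ∈ univ.erase k, star (v a) * w a) := by
        rw [sum_erase _ (by simp [hk])]
    _ ≤ (∑ a ∈ univ.erase k, normSq (star (v a))) * ∑ a ∈ univ.erase k, normSq (w a) :=
        normSq_sum_mul_le _ _ _
    _ = _ := by
        rw [sum_erase univ (f := fun a => normSq (w a)) (by simp [hk]),
          sum_erase_eq_sub (mem_univ k)]
        simp only [star_def, normSq_conj]

theorem nsq_nonneg (ψ : PureState ι) : 0 ≤ nsq ψ :=
  sum_nonneg fun _ _ => normSq_nonneg _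

theorem nsq_normalize (ψ : PureState ι) : nsq (normalize ψ) = nsq ψ / nsq ψ := by
  simp only [nsq, normalize, normSq_div, normSq_ofReal, ← sum_div]
  rw [Real.mul_self_sqrt (sum_nonneg fun _ _ => normSq_nonneg _)]

theorem nsq_normalize_le_one (ψ : PureState ι) : nsq (normalize ψ) ≤ 1 := by
  rw [nsq_normalize]
  exact div_self_le_one _

omit [Fintype ι] in
theorem merge_eq_symm (A : Finset ι) (a : {i // i ∈ A} → Fin 2) (b : {i // i ∉ A} → Fin 2) :
    merge A a b = (Equiv.piEquivPiSubtypeProd (· ∈ A) fun _ => Fin 2).symm (a, b) :=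
  rfl

theorem sum_sum_merge {M : Type} [AddCommMonoid M] (A : Finset ι) (f : (ι → Fin 2) → M) :
    ∑ b, ∑ a, f (merge A a b) = ∑ x, f x := by
  rw [← Equiv.sum_comp (Equiv.piEquivPiSubtypeProd (· ∈ A) fun _ => Fin 2).symm f,
    Fintype.sum_prod_type_right]
  rfl

theorem re_rayleigh_rdm (ψ : PureState ι) (A : Finset ι) (v : ({i // i ∈ A} → Fin 2) → ℂ) :
    (∑ a, ∑ a', star (v a) * rdm ψ A a a' * v a').re =
      ∑ b, normSq (∑ a, star (v a) * ψ (merge A a b)) := by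
  have h : ∑ a, ∑ a', star (v a) * rdm ψ A a a' * v a' =
      ∑ b, ((normSq (∑ a, star (v a) * ψ (merge A a b)) : ℝ) : ℂ) := by
    simp only [← mul_conj, rdm, map_sum, map_mul, conj_conj, star_def, mul_sum, sum_mul]
    rw [sum_comm_cycle]
    refine sum_congr rfl fun b _ => sum_comm.trans <| sum_congr rfl fun _ _ => ?_
    exact sum_congr rfl fun _ _ => by ring
  rw [h, ← ofReal_sum, ofReal_re]

theorem maxEig_rdm_nonneg (ψ : PureState ι) (A : Finset ι) : 0 ≤ maxEig (rdm ψ A) :=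
  Real.iSup_nonneg fun v => by
    rw [re_rayleigh_rdm]
    exact sum_nonneg fun _ _ => normSq_nonneg _

theorem maxEig_rdm_le_nsq (ψ : PureState ι) (A : Finset ι) : maxEig (rdm ψ A) ≤ nsq ψ := by
  refine Real.iSup_le (fun v => ?_) (nsq_nonneg ψ)
  rw [re_rayleigh_rdm]
  calc ∑ b, normSq (∑ a, star (v.1 a) * ψ (merge A a b))
      ≤ ∑ b, (∑ a, normSq (star (v.1 a))) * ∑ a, normSq (ψ (merge A a b)) :=
        sum_le_sum fun b _ => normSq_sum_mul_le _ _ _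
    _ = nsq ψ := by
        simp only [star_def, normSq_conj, v.2, one_mul]
        exact sum_sum_merge A fun x => normSq (ψ x)

theorem GGM_le_one (ψ : PureState ι) : GGM ψ ≤ 1 := by
  have := Real.iSup_nonneg fun A : {A : Finset ι // A.Nonempty ∧ A ≠ univ} =>
    maxEig_rdm_nonneg ψ A.1
  rw [GGM]
  linarith

theorem le_GGM (ψ : PureState ι) {t : ℝ} (ht : t ≤ 1)
    (hA : ∀ A : Finset ι, A.Nonempty → A ≠ univ → maxEig (rdm ψ A) ≤ 1 - t) :
    t ≤ GGM ψ := by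
  have := Real.iSup_le (fun A : {A : Finset ι // A.Nonempty ∧ A ≠ univ} => hA A.1 A.2.1 A.2.2)
    (sub_nonneg.2 ht)
  rw [GGM]
  linarith

theorem GGM_nonneg (ψ : PureState ι) (hψ : nsq ψ ≤ 1) : 0 ≤ GGM ψ :=
  le_GGM ψ zero_le_one fun A _ _ => by
    rw [sub_zero]
    exact (maxEig_rdm_le_nsq ψ A).trans hψ

theorem sum_sum_collapse_config {M : Type} [AddCommMonoid M] (r : ι) (f : (ι → Fin 2) → M) :
    ∑ v : Fin 2, ∑ b : {i // i ≠ r} → Fin 2, f (fun i => if h : i = r then v else b ⟨i, h⟩) =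
      ∑ x, f x := by
  rw [← Equiv.sum_comp (((Equiv.funUnique {i // i = r} (Fin 2)).symm.prodCongr (Equiv.refl _)).trans
    (Equiv.piEquivPiSubtypeProd (· = r) fun _ => Fin 2).symm) f, Fintype.sum_prod_type]
  rfl

theorem nsq_collapse_le (ψ : PureState ι) (r : ι) (ξ : Fin 2 → ℂ) :
    nsq (collapse ψ r ξ) ≤ (∑ v, normSq (ξ v)) * nsq ψ := by
  calc nsq (collapse ψ r ξ)
      ≤ ∑ b : {i // i ≠ r} → Fin 2, (∑ v, normSq (ξ v)) *
          ∑ v, normSq (ψ fun i => if h : i = r then v else b ⟨i, h⟩) :=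
        sum_le_sum fun b _ => normSq_sum_mul_le univ ξ _
    _ = (∑ v, normSq (ξ v)) * nsq ψ := by
        rw [← mul_sum, sum_comm, sum_sum_collapse_config r fun x => normSq (ψ x), nsq]

theorem sum_normSq_xiUp (θ φ : ℝ) : ∑ v, normSq (xiUp θ φ v) = 1 := by
  simp only [xiUp, Fin.sum_univ_two, Matrix.cons_val_zero, Matrix.cons_val_one, normSq_mul,
    normSq_ofReal, normSq_eq_norm_sq (exp _), norm_exp_ofReal_mul_I]
  linear_combination Real.cos_sq_add_sin_sq (θ / 2)

theorem sum_normSq_xiDn (θ φ : ℝ) : ∑ v, normSq (xiDn θ φ v) = 1 := by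
  have : ‖exp (-(φ * I))‖ = 1 := by rw [← neg_mul, ← ofReal_neg, norm_exp_ofReal_mul_I]
  simp only [xiDn, Fin.sum_univ_two, Matrix.cons_val_zero, Matrix.cons_val_one, normSq_mul,
    normSq_neg, normSq_ofReal, normSq_eq_norm_sq (exp _), this]
  linear_combination Real.cos_sq_add_sin_sq (θ / 2)

theorem avgGGM_le (ψ : PureState ι) (r : ι) (θ φ : ℝ) : avgGGM ψ r θ φ ≤ 2 * nsq ψ := by
  have branch (ξ : Fin 2 → ℂ) (hξ : ∑ v, normSq (ξ v) = 1) :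
      nsq (collapse ψ r ξ) * GGM (normalize (collapse ψ r ξ)) ≤ nsq ψ := by
    refine (mul_le_of_le_one_right (nsq_nonneg _) (GGM_le_one _)).trans ?_
    simpa only [hξ, one_mul] using nsq_collapse_le ψ r ξ
  rw [avgGGM, two_mul]
  exact add_le_add (branch _ (sum_normSq_xiUp θ φ)) (branch _ (sum_normSq_xiDn θ φ))

theorem avgGGM_le_LGGM (ψ : PureState ι) (r : ι) {θ φ : ℝ} (hθ : θ ∈ Set.Icc 0 Real.pi)
    (hφ : φ ∈ Set.Ico 0 (2 * Real.pi)) : avgGGM ψ r θ φ ≤ LGGM ψ r := by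
  refine le_csSup ⟨2 * nsq ψ, ?_⟩ ⟨θ, hθ, φ, hφ, rfl⟩
  rintro _ ⟨θ, -, φ, -, rfl⟩
  exact avgGGM_le ψ r θ φ

omit [Fintype ι] in
theorem basisVec_injective : Function.Injective (basisVec (ι := ι)) := fun i j hij => by
  by_contra hne
  simpa [basisVec, hne] using congrFun hij i

omit [Fintype ι] in
theorem basisVec_ne_zero (i : ι) : basisVec i ≠ 0 := fun h => by
  simpa [basisVec] using congrFun h i

theorem wState_basisVec (d : ι → ℂ) (i : ι) : wState d (basisVec i) = d i := by
  simp [wState, basisVec_injective.eq_iff]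

theorem wState_zero (d : ι → ℂ) : wState d 0 = 0 :=
  sum_eq_zero fun i _ => if_neg (basisVec_ne_zero i).symm

theorem nsq_wState (d : ι → ℂ) : nsq (wState d) = ∑ i, normSq (d i) := by
  have hsupp : ∀ x ∉ univ.image basisVec, normSq (wState d x) = 0 := fun x hx => by
    rw [normSq_eq_zero]
    refine sum_eq_zero fun i _ => if_neg fun h : x = basisVec i => hx ?_
    exact h ▸ mem_image_of_mem _ (mem_univ i)
  rw [nsq, ← sum_subset (subset_univ _) fun x _ hx => hsupp x hx,
    sum_image fun i _ j _ h => basisVec_injective h]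
  simp only [wState_basisVec]

omit [Fintype ι] in
theorem piEquivPiSubtypeProd_basisVec_of_pos (p : ι → Prop) [DecidablePred p] (i : {i // p i}) :
    Equiv.piEquivPiSubtypeProd p (fun _ => Fin 2) (basisVec i.1) = (basisVec i, 0) := by
  refine Prod.ext (funext fun j => ?_) (funext fun j => ?_)
  · simp [Equiv.piEquivPiSubtypeProd, basisVec, Subtype.ext_iff]
  · simpa [Equiv.piEquivPiSubtypeProd, basisVec] using fun h : j.1 = i.1 => j.2 (h ▸ i.2)

omit [Fintype ι] in
theorem piEquivPiSubtypeProd_basisVec_of_neg (p : ι → Prop) [DecidablePred p] (i : {i // ¬p i}) :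
    Equiv.piEquivPiSubtypeProd p (fun _ => Fin 2) (basisVec i.1) = (0, basisVec i) := by
  refine Prod.ext (funext fun j => ?_) (funext fun j => ?_)
  · simpa [Equiv.piEquivPiSubtypeProd, basisVec] using fun h : j.1 = i.1 => i.2 (h ▸ j.2)
  · simp [Equiv.piEquivPiSubtypeProd, basisVec, Subtype.ext_iff]

theorem wState_piEquivPiSubtypeProd_symm (p : ι → Prop) [DecidablePred p] (d : ι → ℂ)
    (a : {i // p i} → Fin 2) (b : {i // ¬p i} → Fin 2) :
    wState d ((Equiv.piEquivPiSubtypeProd p fun _ => Fin 2).symm (a, b)) =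
      (if b = 0 then wState (fun i : {i // p i} => d i) a else 0) +
        (if a = 0 then wState (fun i : {i // ¬p i} => d i) b else 0) := by
  rw [wState, ← Fintype.sum_subtype_add_sum_subtype p]
  simp only [Equiv.symm_apply_eq, piEquivPiSubtypeProd_basisVec_of_pos,
    piEquivPiSubtypeProd_basisVec_of_neg, Prod.mk.injEq, and_comm (b := b = 0), ite_and, wState,
    sum_ite_irrel, sum_const_zero]

theorem re_rayleigh_rdm_wState (d : ι → ℂ) (A : Finset ι) (v : ({i // i ∈ A} → Fin 2) → ℂ) :
    (∑ a, ∑ a', star (v a) * rdm (wState d) A a a' * v a').re =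
      normSq (∑ a, star (v a) * wState (fun i : {i // i ∈ A} => d i) a) +
        normSq (v 0) * ∑ i : {i // i ∉ A}, normSq (d i) := by
  set c := ∑ a, star (v a) * wState (fun i : {i // i ∈ A} => d i) a
  have hb (b : {i // i ∉ A} → Fin 2) :
      normSq (∑ a, star (v a) * wState d (merge A a b)) =
        (if b = 0 then normSq c else 0) +
          normSq (v 0) * normSq (wState (fun i : {i // i ∉ A} => d i) b) := by
    simp only [merge_eq_symm, wState_piEquivPiSubtypeProd_symm, mul_add, sum_add_distrib, mul_ite,
      mul_zero, sum_ite_irrel, sum_const_zero, sum_ite_eq', mem_univ, if_true]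
    rcases eq_or_ne b 0 with rfl | hb
    · simp only [if_true, wState_zero, mul_zero, add_zero, normSq_zero]
      -- the two sides differ only in the `Fintype` instances on `{i // i ∈ A}`
      convert rfl
    · simp [hb]
  rw [re_rayleigh_rdm, sum_congr rfl fun b _ => hb b, sum_add_distrib, sum_ite_eq', ← mul_sum]
  simp only [mem_univ, if_true]
  rw [← nsq, nsq_wState]

theorem maxEig_rdm_wState_le (d : ι → ℂ) {A : Finset ι} (hA : A.Nonempty) (hAc : A ≠ univ)
    {t : ℝ} (ht : ∀ i, t ≤ normSq (d i)) :
    maxEig (rdm (wState d) A) ≤ ∑ i, normSq (d i) - t := by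
  set p := ∑ i : {i // i ∈ A}, normSq (d i)
  set q := ∑ i : {i // i ∉ A}, normSq (d i)
  have hpq : p + q = ∑ i, normSq (d i) := by
    convert Fintype.sum_subtype_add_sum_subtype (· ∈ A) fun i => normSq (d i)
  obtain ⟨i, hi⟩ := hA
  obtain ⟨j, hj⟩ := not_forall.1 (mt eq_univ_of_forall hAc)
  have htp : t ≤ p := (ht i).trans (single_le_sum (f := fun i : {i // i ∈ A} => normSq (d i))
    (fun _ _ => normSq_nonneg _) (mem_univ ⟨i, hi⟩))
  have htq : t ≤ q := (ht j).trans (single_le_sum (f := fun i : {i // i ∉ A} => normSq (d i))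
    (fun _ _ => normSq_nonneg _) (mem_univ ⟨j, hj⟩))
  have hq : 0 ≤ q := sum_nonneg fun _ _ => normSq_nonneg _
  refine Real.iSup_le (fun v => ?_) (by linarith)
  rw [re_rayleigh_rdm_wState]
  have hc := normSq_sum_star_mul_le_of_apply_eq_zero v.1 _ (wState_zero fun i : {i // i ∈ A} => d i)
  rw [v.2, ← nsq, nsq_wState] at hc
  set s := normSq (v.1 0)
  have hs0 : 0 ≤ s := normSq_nonneg _
  have hs1 : s ≤ 1 :=
    v.2 ▸ single_le_sum (f := fun a => normSq (v.1 a)) (fun _ _ => normSq_nonneg _) (mem_univ 0)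
  nlinarith [mul_le_mul_of_nonneg_left htp hs0, mul_le_mul_of_nonneg_left htq (sub_nonneg.2 hs1)]

theorem normalize_wState (d : ι → ℂ) :
    normalize (wState d) = wState fun i => d i / (Real.sqrt (nsq (wState d)) : ℂ) := by
  funext x
  simp only [normalize, wState, sum_div, ite_div, zero_div]

theorem le_nsq_mul_GGM_normalize_wState [Nonempty ι] (d : ι → ℂ) {t : ℝ}
    (ht : ∀ i, t ≤ normSq (d i)) : t ≤ nsq (wState d) * GGM (normalize (wState d)) := by
  obtain ⟨i₀⟩ := ‹Nonempty ι›
  have htS : t ≤ nsq (wState d) := by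
    rw [nsq_wState]
    exact (ht i₀).trans (single_le_sum (f := fun i => normSq (d i)) (fun _ _ => normSq_nonneg _)
      (mem_univ i₀))
  rcases (nsq_nonneg (wState d)).eq_or_lt with hS0 | hSpos
  · rw [← hS0] at htS ⊢
    simpa using htS
  set S := nsq (wState d)
  have hnorm (i : ι) : normSq (d i / (Real.sqrt S : ℂ)) = normSq (d i) / S := by
    rw [normSq_div, normSq_ofReal, Real.mul_self_sqrt hSpos.le]
  have hGGM : t / S ≤ GGM (normalize (wState d)) := by
    refine le_GGM _ ((div_le_one hSpos).2 htS) fun A hA hAc => ?_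
    rw [normalize_wState]
    refine (maxEig_rdm_wState_le _ hA hAc (t := t / S) fun i => ?_).trans_eq ?_
    · rw [hnorm]
      exact div_le_div_of_nonneg_right (ht i) hSpos.le
    · rw [sum_congr rfl fun i _ => hnorm i, ← sum_div, ← nsq_wState, div_self hSpos.ne']
  calc t = S * (t / S) := (mul_div_cancel₀ t hSpos.ne').symm
    _ ≤ S * GGM (normalize (wState d)) := mul_le_mul_of_nonneg_left hGGM hSpos.le

theorem collapse_wState_xiUp_zero (a : ι → ℂ) (r : ι) :
    collapse (wState a) r (xiUp 0 0) = wState fun i : {i // i ≠ r} => a i := by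
  funext b
  have h := wState_piEquivPiSubtypeProd_symm (· = r) a 0 b
  simp only [wState_zero, ite_self, if_true, zero_add] at h
  simp only [collapse, xiUp, zero_div, Real.cos_zero, Real.sin_zero, ofReal_one, ofReal_zero,
    mul_zero, Fin.sum_univ_two, Matrix.cons_val_zero, Matrix.cons_val_one, Matrix.cons_val_fin_one,
    one_mul, zero_mul, add_zero]
  exact h

theorem stmt9_general (N : ℕ) (hN : 3 ≤ N) (a : Fin N → ℂ) (r : Fin N) :
    (⨅ i, Complex.normSq (a i)) ≤ LGGM (wState a) r := by
  have : Nontrivial (Fin N) := Fin.nontrivial_iff_two_le.2 (by omega)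
  obtain ⟨j, hj⟩ := exists_ne r
  have : Nonempty {i // i ≠ r} := ⟨⟨j, hj⟩⟩
  calc (⨅ i, normSq (a i))
      ≤ nsq (collapse (wState a) r (xiUp 0 0)) *
          GGM (normalize (collapse (wState a) r (xiUp 0 0))) := by
        rw [collapse_wState_xiUp_zero]
        exact le_nsq_mul_GGM_normalize_wState _ fun i => ciInf_le (Finite.bddBelow_range _) i.1
    _ ≤ avgGGM (wState a) r 0 0 :=
        le_add_of_nonneg_right (mul_nonneg (nsq_nonneg _) (GGM_nonneg _ (nsq_normalize_le_one _)))
    _ ≤ LGGM (wState a) r :=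
        avgGGM_le_LGGM _ _ ⟨le_rfl, Real.pi_pos.le⟩ ⟨le_rfl, by positivity⟩

/-- For any `N`-qubit generalized W state, the LGGM under single-qubit
projective measurement on any qubit `r` is at least the GGM
`minᵢ |aᵢ|²` of the original state. -/
theorem stmt9 (N : ℕ) (hN : 3 ≤ N) (a : Fin N → ℂ)
    (h : ∑ i, Complex.normSq (a i) = 1) (r : Fin N) :
    (⨅ i, Complex.normSq (a i)) ≤ LGGM (wState a) r :=
  stmt9_general N hN a r

end QI
end
end

section
/- For even N > 2 and 1 ≤ k ≤ N/2, measuring one qubit of the Dicke state |D_k^N⟩ in the computational basis gives an average GGM of the post-measurement (N−1)-qubit Dicke states equal to (N−2)/(2(N−1)) when k = N/2, and k/N when k < N/2; hence in both cases the average equals the GGM of the original Dicke state. -/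
open scoped BigOperators

noncomputable section

namespace QI

variable {ι : Type} [Fintype ι] [DecidableEq ι]

/-!
Measuring qubit `r` of `|D_j^M⟩` in the computational basis leaves `|D_j^{M-1}⟩` with
probability `(M-j)/M` and `|D_{j-1}^{M-1}⟩` with probability `j/M`, so everything reduces to
the GGM of Dicke states. Across a cut into `m` and `M - m` qubits, Cauchy–Schwarz on the
amplitudes of each Hamming weight bounds the Rayleigh quotient of the reduced state of
`|D_j^M⟩` by `max_l C(m,l) C(M-m,j-l) / C(M,j)`, and the Dicke vector `|D_l^m⟩` on the cut
attains it. Two terms of Vandermonde's identity bound `C(m,l) C(M-m,j-l)` by `C(M-1,j)` when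
`2j < M`, by `C(M-1,j-1)` when `2j > M` and by `2 C(M-2,j-1)` when `2j = M`, values attained
by cutting off one qubit, resp. two in the balanced case. Hence `G(|D_j^M⟩)` is `j/M`,
`(M-j)/M` or `(M-2)/(2(M-1))`, and the averages are computed directly.
-/

open Finset

theorem choose_mul_choose_add_choose_mul_choose_le {m n k : ℕ} {p q : ℕ × ℕ}
    (hp : p ∈ antidiagonal k) (hq : q ∈ antidiagonal k) (hpq : p ≠ q) :
    m.choose p.1 * n.choose p.2 + m.choose q.1 * n.choose q.2 ≤ (m + n).choose k := by
  rw [Nat.add_choose_eq,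
    ← sum_pair (f := fun ij : ℕ × ℕ => m.choose ij.1 * n.choose ij.2) hpq]
  exact sum_le_sum_of_subset_of_nonneg (insert_subset hp (singleton_subset_iff.2 hq))
    fun _ _ _ => Nat.zero_le _

theorem choose_le_choose_succ_of_two_mul_lt {n w : ℕ} (h : 2 * w < n) :
    n.choose w ≤ n.choose (w + 1) := by
  rcases (by omega : 2 * w + 1 = n ∨ w < n / 2) with rfl | hlt
  · exact (Nat.choose_symm_half w).ge
  · exact Nat.choose_le_succ_of_lt_half_left hlt

theorem succ_choose_mul_choose_le {m n l w : ℕ} (hw : 2 * w < n) :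
    (m + 1).choose l * n.choose w ≤ (m + n).choose (l + w) := by
  cases l with
  | zero => simpa using Nat.choose_le_choose w (by omega : n ≤ m + n)
  | succ l =>
    calc (m + 1).choose (l + 1) * n.choose w
        = m.choose (l + 1) * n.choose w + m.choose l * n.choose w := by
          rw [Nat.choose_succ_succ', add_mul, add_comm]
      _ ≤ m.choose (l + 1) * n.choose w + m.choose l * n.choose (w + 1) := by
          gcongr
          exact choose_le_choose_succ_of_two_mul_lt hw
      _ ≤ (m + n).choose (l + 1 + w) :=
          choose_mul_choose_add_choose_mul_choose_le (p := (l + 1, w)) (q := (l, w + 1))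
            (by simp) (by simp; omega) (by simp)

theorem choose_mul_choose_le_of_two_mul_lt_or {m n l w : ℕ} (hm : 0 < m) (hn : 0 < n)
    (h : 2 * l < m ∨ 2 * w < n) : m.choose l * n.choose w ≤ (m + n - 1).choose (l + w) := by
  obtain ⟨m, rfl⟩ := Nat.exists_eq_add_one_of_ne_zero hm.ne'
  obtain ⟨n, rfl⟩ := Nat.exists_eq_add_one_of_ne_zero hn.ne'
  rcases h with hl | hw
  · rw [mul_comm, show m + 1 + (n + 1) - 1 = n + (m + 1) by omega, add_comm l]
    exact succ_choose_mul_choose_le hl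
  · rw [show m + 1 + (n + 1) - 1 = m + (n + 1) by omega]
    exact succ_choose_mul_choose_le hw

theorem choose_mul_choose_le_of_lt_two_mul {m n l w : ℕ} (hm : 0 < m) (hn : 0 < n)
    (h : m + n < 2 * (l + w)) : m.choose l * n.choose w ≤ (m + n - 1).choose (l + w - 1) := by
  by_cases hlw : l ≤ m ∧ w ≤ n
  · obtain ⟨hl, hw⟩ := hlw
    have := choose_mul_choose_le_of_two_mul_lt_or hm hn (l := m - l) (w := n - w) (by omega)
    rwa [Nat.choose_symm hl, Nat.choose_symm hw,
      Nat.choose_symm_of_eq_add (by omega : m + n - 1 = m - l + (n - w) + (l + w - 1))] at this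
  · rcases not_and_or.1 hlw with hl | hw
    · simp [Nat.choose_eq_zero_of_lt (not_le.1 hl)]
    · simp [Nat.choose_eq_zero_of_lt (not_le.1 hw)]

theorem choose_two_mul_sub_one_le (j : ℕ) :
    (2 * j - 1).choose j ≤ 2 * (2 * j - 2).choose (j - 1) := by
  rcases j with _ | i
  · simp
  · have hmid := Nat.choose_le_middle (i + 1) (2 * i)
    rw [show 2 * i / 2 = i by omega] at hmid
    rw [show 2 * (i + 1) - 1 = 2 * i + 1 by omega, show 2 * (i + 1) - 2 = 2 * i by omega,
      Nat.choose_succ_succ', Nat.add_sub_cancel]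
    omega

theorem centralBinom_succ_mul_centralBinom_succ_le (a b : ℕ) :
    (a + 1).centralBinom * (b + 1).centralBinom ≤ 2 * (a + b + 1).centralBinom := by
  have hhalf (i : ℕ) : (i + 1).centralBinom = 2 * (2 * i + 1).choose i := by
    rw [Nat.centralBinom_eq_two_mul_choose, show 2 * (i + 1) = 2 * i + 1 + 1 by ring,
      Nat.choose_succ_succ', Nat.choose_symm_half]
    ring
  have := choose_mul_choose_add_choose_mul_choose_le (m := 2 * a + 1) (n := 2 * b + 1)
    (p := (a, b + 1)) (q := (a + 1, b)) (k := a + b + 1) (by simp; omega) (by simp; omega)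
    (by simp)
  rw [Nat.choose_symm_half a, Nat.choose_symm_half b,
    show 2 * a + 1 + (2 * b + 1) = 2 * (a + b + 1) by ring,
    ← Nat.centralBinom_eq_two_mul_choose] at this
  rw [hhalf, hhalf]
  nlinarith

theorem choose_mul_choose_le_of_two_mul_eq {m n l w : ℕ} (hm : 0 < m) (hn : 0 < n)
    (h : 2 * (l + w) = m + n) : m.choose l * n.choose w ≤ 2 * (m + n - 2).choose (l + w - 1) := by
  by_cases hsplit : 2 * l < m ∨ 2 * w < n
  · calc m.choose l * n.choose w ≤ (m + n - 1).choose (l + w) :=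
          choose_mul_choose_le_of_two_mul_lt_or hm hn hsplit
      _ = (2 * (l + w) - 1).choose (l + w) := by rw [h]
      _ ≤ 2 * (2 * (l + w) - 2).choose (l + w - 1) := choose_two_mul_sub_one_le _
      _ = 2 * (m + n - 2).choose (l + w - 1) := by rw [h]
  · obtain ⟨a, rfl⟩ : ∃ a, l = a + 1 := ⟨l - 1, by omega⟩
    obtain ⟨b, rfl⟩ : ∃ b, w = b + 1 := ⟨w - 1, by omega⟩
    obtain rfl : m = 2 * (a + 1) := by omega
    obtain rfl : n = 2 * (b + 1) := by omega
    have := centralBinom_succ_mul_centralBinom_succ_le a b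
    simp only [Nat.centralBinom_eq_two_mul_choose] at this
    convert this using 3 <;> omega

/-- `M.choose j` times the squared Schmidt coefficients of `|D_j^M⟩` across the cuts into `m`
and `M - m` qubits: the weight of `|D_l^m⟩ ⊗ |D_{j-l}^{M-m}⟩`. -/
def dickeCutWeights (M j : ℕ) : Set ℕ :=
  {x | ∃ m l, 0 < m ∧ m < M ∧ l ≤ m ∧ l ≤ j ∧ x = m.choose l * (M - m).choose (j - l)}

theorem isGreatest_dickeCutWeights_of_two_mul_lt {M j : ℕ} (hM : 2 ≤ M) (h : 2 * j < M) :
    IsGreatest (dickeCutWeights M j) ((M - 1).choose j) := by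
  refine ⟨⟨1, 0, by omega, by omega, by omega, by omega, by simp⟩, ?_⟩
  rintro _ ⟨m, l, hm, hmM, -, hl, rfl⟩
  have := choose_mul_choose_le_of_two_mul_lt_or hm (Nat.sub_pos_of_lt hmM) (l := l) (w := j - l)
    (by omega)
  rwa [Nat.add_sub_cancel' hmM.le, Nat.add_sub_cancel' hl] at this

theorem isGreatest_dickeCutWeights_of_lt_two_mul {M j : ℕ} (hM : 2 ≤ M) (h : M < 2 * j) :
    IsGreatest (dickeCutWeights M j) ((M - 1).choose (j - 1)) := by
  refine ⟨⟨1, 1, by omega, by omega, by omega, by omega, by simp⟩, ?_⟩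
  rintro _ ⟨m, l, hm, hmM, -, hl, rfl⟩
  have := choose_mul_choose_le_of_lt_two_mul hm (Nat.sub_pos_of_lt hmM) (l := l) (w := j - l)
    (by omega)
  rwa [Nat.add_sub_cancel' hmM.le, Nat.add_sub_cancel' hl] at this

theorem isGreatest_dickeCutWeights_of_two_mul_eq {M j : ℕ} (hM : 3 ≤ M) (h : 2 * j = M) :
    IsGreatest (dickeCutWeights M j) (2 * (M - 2).choose (j - 1)) := by
  refine ⟨⟨2, 1, by omega, by omega, by omega, by omega, by simp⟩, ?_⟩
  rintro _ ⟨m, l, hm, hmM, -, hl, rfl⟩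
  have := choose_mul_choose_le_of_two_mul_eq hm (Nat.sub_pos_of_lt hmM) (l := l) (w := j - l)
    (by omega)
  rwa [Nat.add_sub_cancel' hmM.le, Nat.add_sub_cancel' hl] at this

def weight {κ : Type} [Fintype κ] (x : κ → Fin 2) : ℕ := ∑ i, (x i : ℕ)

theorem weight_eq_card_filter {κ : Type} [Fintype κ] (x : κ → Fin 2) :
    weight x = #{i | x i = 1} := by
  rw [card_filter]
  exact sum_congr rfl fun i _ => by
    rcases Fin.exists_fin_two.1 ⟨x i, rfl⟩ with h | h <;> simp [h]

theorem weight_le_card {κ : Type} [Fintype κ] (x : κ → Fin 2) : weight x ≤ Fintype.card κ :=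
  weight_eq_card_filter x ▸ card_filter_le _ _

theorem card_filter_weight_eq (t : ℕ) :
    #{x : ι → Fin 2 | weight x = t} = (Fintype.card ι).choose t := by
  rw [← card_univ, ← card_powersetCard]
  refine card_nbij' (fun x => ({i | x i = 1} : Finset ι)) (fun s i => if i ∈ s then 1 else 0)
    ?_ ?_ ?_ ?_
  · intro x hx
    simp_all [mem_powersetCard, weight_eq_card_filter]
  · intro s hs
    simp_all [mem_powersetCard, weight_eq_card_filter]
  · intro x _
    funext i
    rcases Fin.exists_fin_two.1 ⟨x i, rfl⟩ with h | h <;> simp [h]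
  · intro s _
    ext i
    by_cases hi : i ∈ s <;> simp [hi]

theorem card_filter_add_weight_eq {s j : ℕ} (hs : s ≤ j) :
    #{x : ι → Fin 2 | s + weight x = j} = (Fintype.card ι).choose (j - s) := by
  rw [← card_filter_weight_eq]
  exact congrArg card (filter_congr fun x _ => by omega)

theorem weight_merge (A : Finset ι) (a : {i // i ∈ A} → Fin 2) (b : {i // i ∉ A} → Fin 2) :
    weight (merge A a b) = weight a + weight b := by
  rw [weight, weight, weight, ← Fintype.sum_subtype_add_sum_subtype (· ∈ A)]
  congr 1
  · convert Fintype.sum_congr _ _ fun i : {i // i ∈ A} =>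
      (by simp [merge] : ((merge A a b i : Fin 2) : ℕ) = a i)
  · exact Fintype.sum_congr _ _ fun i => by simp [merge, i.2]

theorem weight_insert (r : ι) (v : Fin 2) (b : {i // i ≠ r} → Fin 2) :
    weight (fun i => if h : i = r then v else b ⟨i, h⟩) = v + weight b := by
  rw [weight, Fintype.sum_eq_add_sum_subtype_ne _ r, dif_pos rfl]
  exact congrArg _ (Fintype.sum_congr _ _ fun i => by simp [i.2])

theorem dicke_apply {κ : Type} [Fintype κ] (j : ℕ) (x : κ → Fin 2) :
    dicke j x = if weight x = j then ((1 / √((Fintype.card κ).choose j) : ℝ) : ℂ) else 0 :=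
  rfl

theorem one_div_sqrt_mul_self (x : ℝ) (hx : 0 ≤ x) : 1 / √x * (1 / √x) = 1 / x := by
  rw [div_mul_div_comm, one_mul, Real.mul_self_sqrt hx]

theorem nsq_dicke {j : ℕ} (hj : j ≤ Fintype.card ι) : nsq (dicke j : PureState ι) = 1 := by
  have hC : (0 : ℝ) < (Fintype.card ι).choose j := by exact_mod_cast Nat.choose_pos hj
  simp only [nsq, dicke_apply, apply_ite Complex.normSq, Complex.normSq_ofReal,
    Complex.normSq_zero]
  rw [← sum_filter, sum_const, nsmul_eq_mul, card_filter_weight_eq,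
    one_div_sqrt_mul_self _ hC.le]
  field_simp

def rayleigh {κ : Type} [Fintype κ] (ρ : κ → κ → ℂ) (v : κ → ℂ) : ℝ :=
  (∑ i, ∑ j, star (v i) * ρ i j * v j).re

theorem maxEig_le {κ : Type} [Fintype κ] [Nonempty κ] {ρ : κ → κ → ℂ} {c : ℝ}
    (h : ∀ v : κ → ℂ, ∑ i, Complex.normSq (v i) = 1 → rayleigh ρ v ≤ c) :
    maxEig ρ ≤ c := by
  classical
  have : Nonempty {v : κ → ℂ // ∑ i, Complex.normSq (v i) = 1} :=
    ⟨⟨Pi.single (Classical.arbitrary κ) 1,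
      by simp [Pi.single_apply, apply_ite Complex.normSq]⟩⟩
  exact ciSup_le fun v => h v.1 v.2

theorem rayleigh_le_maxEig {κ : Type} [Fintype κ] {ρ : κ → κ → ℂ} {c : ℝ}
    (h : ∀ v : κ → ℂ, ∑ i, Complex.normSq (v i) = 1 → rayleigh ρ v ≤ c)
    {v : κ → ℂ} (hv : ∑ i, Complex.normSq (v i) = 1) : rayleigh ρ v ≤ maxEig ρ :=
  le_ciSup (f := fun v : {v : κ → ℂ // ∑ i, Complex.normSq (v i) = 1} => rayleigh ρ v.1)
    ⟨c, by rintro _ ⟨w, rfl⟩; exact h w.1 w.2⟩ ⟨v, hv⟩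

theorem rayleigh_rdm (ψ : PureState ι) (A : Finset ι) (v : ({i // i ∈ A} → Fin 2) → ℂ) :
    rayleigh (rdm ψ A) v = ∑ b, Complex.normSq (∑ a, star (v a) * ψ (merge A a b)) := by
  have hexpand : ∑ a, ∑ a', star (v a) * rdm ψ A a a' * v a' =
      ∑ b, (∑ a, star (v a) * ψ (merge A a b)) *
        star (∑ a, star (v a) * ψ (merge A a b)) := by
    simp only [rdm, star_sum, star_mul', star_star, mul_sum, sum_mul]
    simp_rw [sum_comm (β := ℂ) (s := (univ : Finset ({i // i ∈ A} → Fin 2)))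
      (t := (univ : Finset ({i // i ∉ A} → Fin 2)))]
    refine sum_congr rfl fun b _ => ?_
    rw [sum_comm (β := ℂ)]
    exact sum_congr rfl fun a' _ => sum_congr rfl fun a _ => by ring
  rw [rayleigh, hexpand, Complex.re_sum]
  exact sum_congr rfl fun b _ => by rw [Complex.star_def, Complex.mul_conj, Complex.ofReal_re]

theorem normSq_sum_le_card_mul {α : Type} (s : Finset α) (f : α → ℂ) :
    Complex.normSq (∑ a ∈ s, f a) ≤ #s * ∑ a ∈ s, Complex.normSq (f a) := by
  simp_rw [← Complex.sq_norm]
  exact (pow_le_pow_left₀ (norm_nonneg _) (norm_sum_le s f) 2).trans sq_sum_le_card_mul_sum_sq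

theorem sum_star_mul_dicke_merge (j : ℕ) (A : Finset ι) (v : ({i // i ∈ A} → Fin 2) → ℂ)
    (b : {i // i ∉ A} → Fin 2) :
    ∑ a, star (v a) * dicke j (merge A a b) =
      ((1 / √((Fintype.card ι).choose j) : ℝ) : ℂ) *
        ∑ a with weight a + weight b = j, star (v a) := by
  simp only [dicke_apply, weight_merge, mul_ite, mul_zero, mul_sum, sum_filter]
  exact sum_congr rfl fun a _ => by split_ifs <;> ring

theorem card_filter_weight_add_mul_choose_le {j K : ℕ} (A : Finset ι)
    (hK : ∀ l ≤ j, l ≤ #A → (#A).choose l * (Fintype.card ι - #A).choose (j - l) ≤ K)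
    (a : {i // i ∈ A} → Fin 2) :
    #{b : {i // i ∉ A} → Fin 2 | weight a + weight b = j} * (#A).choose (weight a) ≤ K := by
  by_cases ha : weight a ≤ j
  · rw [card_filter_add_weight_eq ha, Fintype.card_subtype_compl, Fintype.card_coe, mul_comm]
    exact hK _ ha ((weight_le_card a).trans_eq (Fintype.card_coe A))
  · rw [filter_false_of_mem fun b _ => by omega, card_empty, zero_mul]
    exact Nat.zero_le K

theorem sum_card_mul_sum_normSq_le {j K : ℕ} (A : Finset ι)
    (hK : ∀ l ≤ j, l ≤ #A → (#A).choose l * (Fintype.card ι - #A).choose (j - l) ≤ K)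
    (v : ({i // i ∈ A} → Fin 2) → ℂ) (hv : ∑ a, Complex.normSq (v a) = 1) :
    ∑ b : {i // i ∉ A} → Fin 2,
      (#{a : {i // i ∈ A} → Fin 2 | weight a + weight b = j} : ℝ) *
        ∑ a with weight a + weight b = j, Complex.normSq (v a) ≤ K := by
  -- Each `a` lies in `C(|Aᶜ|, j - |a|)` of the summation sets, each of size `C(|A|, |a|)`.
  calc ∑ b : {i // i ∉ A} → Fin 2,
        (#{a : {i // i ∈ A} → Fin 2 | weight a + weight b = j} : ℝ) *
          ∑ a with weight a + weight b = j, Complex.normSq (v a)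
      = ∑ a, ∑ b : {i // i ∉ A} → Fin 2, if weight a + weight b = j
          then ((#A).choose (weight a) : ℝ) * Complex.normSq (v a) else 0 := by
        simp only [mul_sum, sum_filter]
        rw [sum_comm (β := ℝ)]
        refine sum_congr rfl fun a _ => sum_congr rfl fun b _ => ?_
        split_ifs with h
        · rw [← Fintype.card_coe A, ← card_filter_weight_eq]
          exact congrArg (fun n : ℕ => (n : ℝ) * _)
            (congrArg card (filter_congr fun a' _ => by omega))
        · rw [mul_zero]
    _ = ∑ a, ((#{b : {i // i ∉ A} → Fin 2 | weight a + weight b = j} *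
          (#A).choose (weight a) : ℕ) : ℝ) * Complex.normSq (v a) := by
        simp only [← sum_filter, sum_const, nsmul_eq_mul]
        push_cast
        exact sum_congr rfl fun a _ => by ring
    _ ≤ ∑ a, (K : ℝ) * Complex.normSq (v a) := by
        refine sum_le_sum fun a _ => mul_le_mul_of_nonneg_right ?_ (Complex.normSq_nonneg _)
        exact_mod_cast card_filter_weight_add_mul_choose_le A hK a
    _ = K := by rw [← mul_sum, hv, mul_one]

theorem rayleigh_rdm_dicke_le {j K : ℕ} (A : Finset ι)
    (hK : ∀ l ≤ j, l ≤ #A → (#A).choose l * (Fintype.card ι - #A).choose (j - l) ≤ K)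
    (v : ({i // i ∈ A} → Fin 2) → ℂ) (hv : ∑ a, Complex.normSq (v a) = 1) :
    rayleigh (rdm (dicke j) A) v ≤ K / (Fintype.card ι).choose j := by
  set c : ℝ := 1 / √((Fintype.card ι).choose j)
  rw [rayleigh_rdm]
  calc ∑ b, Complex.normSq (∑ a, star (v a) * dicke j (merge A a b))
      = ∑ b, c * c * Complex.normSq (∑ a with weight a + weight b = j, star (v a)) := by
        simp only [sum_star_mul_dicke_merge, Complex.normSq_mul, Complex.normSq_ofReal]
        rfl
    _ ≤ ∑ b, c * c * ((#{a | weight a + weight b = j} : ℝ) *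
          ∑ a with weight a + weight b = j, Complex.normSq (v a)) := by
        gcongr with b
        simpa only [Complex.star_def, Complex.normSq_conj] using
          normSq_sum_le_card_mul _ (fun a => star (v a))
    _ ≤ c * c * K := by
        rw [← mul_sum]
        gcongr
        exact sum_card_mul_sum_normSq_le A hK v hv
    _ = K / (Fintype.card ι).choose j := by
        rw [one_div_sqrt_mul_self _ (Nat.cast_nonneg _)]
        ring

theorem rayleigh_rdm_dicke_dicke {j l : ℕ} (A : Finset ι) (hl : l ≤ j) (hlA : l ≤ #A) :
    rayleigh (rdm (dicke j) A) (dicke l) =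
      (#A).choose l * (Fintype.card ι - #A).choose (j - l) / (Fintype.card ι).choose j := by
  have hC : (0 : ℝ) < (#A).choose l := by exact_mod_cast Nat.choose_pos hlA
  have hinner (b : {i // i ∉ A} → Fin 2) :
      ∑ a : {i // i ∈ A} → Fin 2 with weight a + weight b = j, star (dicke l a) =
        if l + weight b = j then ((((#A).choose l : ℝ) / √((#A).choose l) : ℝ) : ℂ)
        else 0 := by
    split_ifs with hb
    · rw [filter_congr (q := fun a : {i // i ∈ A} → Fin 2 => weight a = l) fun a _ => by omega]
      calc ∑ a with weight a = l, star (dicke l a)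
          = ∑ a with weight a = l, (((1 / √((#A).choose l)) : ℝ) : ℂ) :=
            sum_congr rfl fun a ha => by
              rw [dicke_apply, if_pos (mem_filter.1 ha).2, Fintype.card_coe, Complex.star_def,
                Complex.conj_ofReal]
        _ = _ := by
            rw [sum_const, card_filter_weight_eq, Fintype.card_coe, nsmul_eq_mul]
            push_cast
            ring
    · exact sum_eq_zero fun a ha => by
        rw [dicke_apply, if_neg (by have := (mem_filter.1 ha).2; omega), star_zero]
  set c : ℝ := 1 / √((Fintype.card ι).choose j)
  rw [rayleigh_rdm]
  calc ∑ b, Complex.normSq (∑ a, star (dicke l a) * dicke j (merge A a b))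
      = ∑ b : {i // i ∉ A} → Fin 2,
          if l + weight b = j then c * c * (#A).choose l else 0 := by
        refine sum_congr rfl fun b _ => ?_
        rw [sum_star_mul_dicke_merge, hinner]
        split_ifs
        · rw [Complex.normSq_mul, Complex.normSq_ofReal, Complex.normSq_ofReal]
          congr 1
          rw [div_mul_div_comm, Real.mul_self_sqrt hC.le]
          field_simp
        · rw [mul_zero, Complex.normSq_zero]
    _ = _ := by
        rw [← sum_filter, sum_const, nsmul_eq_mul, card_filter_add_weight_eq hl,
          Fintype.card_subtype_compl, Fintype.card_coe,
          one_div_sqrt_mul_self _ (Nat.cast_nonneg _)]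
        ring

theorem GGM_dicke {j K : ℕ} (hK : IsGreatest (dickeCutWeights (Fintype.card ι) j) K) :
    GGM (dicke j : PureState ι) = 1 - K / (Fintype.card ι).choose j := by
  have hbound (A : {A : Finset ι // A.Nonempty ∧ A ≠ univ}) :=
    rayleigh_rdm_dicke_le (j := j) A.1 fun l hl hlA => hK.2
      ⟨#A.1, l, card_pos.2 A.2.1, (card_lt_iff_ne_univ _).2 A.2.2, hlA, hl, rfl⟩
  obtain ⟨m, l, hm, hmM, hlm, hl, rfl⟩ := hK.1
  obtain ⟨A, -, rfl⟩ := exists_subset_card_eq (s := univ) (hmM.le.trans_eq card_univ.symm)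
  have hA : A.Nonempty ∧ A ≠ univ :=
    ⟨card_pos.1 hm, fun h => by rw [h, card_univ] at hmM; omega⟩
  have hattain : (((#A).choose l * (Fintype.card ι - #A).choose (j - l) : ℕ) : ℝ) /
      (Fintype.card ι).choose j ≤ maxEig (rdm (dicke j) A) := by
    push_cast
    rw [← rayleigh_rdm_dicke_dicke A hl hlm]
    exact rayleigh_le_maxEig (hbound ⟨A, hA⟩)
      (nsq_dicke (hlm.trans_eq (Fintype.card_coe A).symm))
  have : Nonempty {A : Finset ι // A.Nonempty ∧ A ≠ univ} := ⟨⟨A, hA⟩⟩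
  rw [GGM, le_antisymm (ciSup_le fun A => maxEig_le (hbound A))
    (hattain.trans (le_ciSup (f := fun A : {A : Finset ι // A.Nonempty ∧ A ≠ univ} =>
      maxEig (rdm (dicke j : PureState ι) A.1)) (Set.finite_range _).bddAbove ⟨A, hA⟩))]

theorem cast_choose_pred_div_cast_choose {M j : ℕ} (hj : j ≤ M) (hM : 0 < M) :
    ((M - 1).choose j : ℝ) / M.choose j = (M - j) / M := by
  have h := congrArg (Nat.cast (R := ℝ)) (Nat.choose_mul_succ_eq (M - 1) j)
  rw [Nat.sub_add_cancel hM] at h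
  push_cast [Nat.cast_sub hj] at h
  have hC : (0 : ℝ) < M.choose j := by exact_mod_cast Nat.choose_pos hj
  rw [div_eq_div_iff hC.ne' (by exact_mod_cast hM.ne')]
  linarith

theorem cast_choose_pred_pred_div_cast_choose {M j : ℕ} (hj0 : 0 < j) (hj : j ≤ M) :
    ((M - 1).choose (j - 1) : ℝ) / M.choose j = j / M := by
  have h := congrArg (Nat.cast (R := ℝ)) (Nat.add_one_mul_choose_eq (M - 1) (j - 1))
  rw [Nat.sub_add_cancel (hj0.trans_le hj), Nat.sub_add_cancel hj0] at h
  push_cast at h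
  have hC : (0 : ℝ) < M.choose j := by exact_mod_cast Nat.choose_pos hj
  rw [div_eq_div_iff hC.ne' (by exact_mod_cast (hj0.trans_le hj).ne')]
  linarith

theorem GGM_dicke_of_two_mul_lt {j : ℕ} (hM : 2 ≤ Fintype.card ι)
    (h : 2 * j < Fintype.card ι) :
    GGM (dicke j : PureState ι) = j / Fintype.card ι := by
  rw [GGM_dicke (isGreatest_dickeCutWeights_of_two_mul_lt hM h),
    cast_choose_pred_div_cast_choose (by omega) (by omega)]
  field_simp
  ring

theorem GGM_dicke_of_lt_two_mul {j : ℕ} (hM : 2 ≤ Fintype.card ι) (hj : j ≤ Fintype.card ι)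
    (h : Fintype.card ι < 2 * j) :
    GGM (dicke j : PureState ι) = (Fintype.card ι - j) / Fintype.card ι := by
  rw [GGM_dicke (isGreatest_dickeCutWeights_of_lt_two_mul hM h),
    cast_choose_pred_pred_div_cast_choose (by omega) hj]
  field_simp

theorem GGM_dicke_of_two_mul_eq {j : ℕ} (hM : 3 ≤ Fintype.card ι)
    (h : 2 * j = Fintype.card ι) :
    GGM (dicke j : PureState ι) = (Fintype.card ι - 2) / (2 * (Fintype.card ι - 1)) := by
  obtain ⟨i, rfl⟩ : ∃ i, j = i + 1 := ⟨j - 1, by omega⟩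
  rw [GGM_dicke (isGreatest_dickeCutWeights_of_two_mul_eq hM h), ← h,
    show 2 * (i + 1) - 2 = 2 * i by omega, show 2 * (i + 1) = 2 * i + 1 + 1 by ring]
  have h₁ := congrArg (Nat.cast (R := ℝ)) (Nat.add_one_mul_choose_eq (2 * i + 1) i)
  have h₂ := congrArg (Nat.cast (R := ℝ)) (Nat.add_one_mul_choose_eq (2 * i) i)
  rw [Nat.choose_symm_half] at h₂
  push_cast at h₁ h₂ ⊢
  have hC : (0 : ℝ) < (2 * i + 1 + 1).choose (i + 1) := by
    exact_mod_cast Nat.choose_pos (by omega)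
  field_simp
  rw [eq_div_iff (by ring_nf; positivity)]
  linear_combination -2 * h₁ - 4 * h₂

theorem card_subtype_ne (r : ι) : Fintype.card {i // i ≠ r} = Fintype.card ι - 1 := by
  rw [Fintype.card_subtype_compl, Fintype.card_subtype_eq]

theorem collapse_xiUp_zero {κ : Type} [DecidableEq κ] (ψ : PureState κ) (r : κ) :
    collapse ψ r (xiUp 0 0) = fun b => ψ (fun i => if h : i = r then 0 else b ⟨i, h⟩) := by
  funext b
  simp [collapse, xiUp, Fin.sum_univ_two]

theorem collapse_xiDn_zero {κ : Type} [DecidableEq κ] (ψ : PureState κ) (r : κ) :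
    collapse ψ r (xiDn 0 0) = fun b => ψ (fun i => if h : i = r then 1 else b ⟨i, h⟩) := by
  funext b
  simp [collapse, xiDn, Fin.sum_univ_two]

theorem nsq_ofReal_smul (c : ℝ) (ψ : PureState ι) :
    nsq ((c : ℂ) • ψ) = c ^ 2 * nsq ψ := by
  simp [nsq, Complex.normSq_mul, mul_sum, sq]

theorem normalize_ofReal_smul {c : ℝ} (hc : 0 < c) {ψ : PureState ι} (hψ : nsq ψ = 1) :
    normalize ((c : ℂ) • ψ) = ψ := by
  funext x
  rw [normalize, nsq_ofReal_smul, hψ, mul_one, Real.sqrt_sq hc.le, Pi.smul_apply, smul_eq_mul,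
    mul_div_cancel_left₀ _ (by exact_mod_cast hc.ne')]

theorem dicke_insert_eq_smul_dicke {j t : ℕ} (r : ι) (v : Fin 2) (ht : t < Fintype.card ι)
    (hvt : v + t = j) :
    (fun b => dicke j (fun i => if h : i = r then v else b ⟨i, h⟩)) =
      ((√(((Fintype.card ι - 1).choose t : ℝ) / (Fintype.card ι).choose j) : ℝ) : ℂ) •
        (dicke t : PureState {i // i ≠ r}) := by
  have hC : (0 : ℝ) < (Fintype.card ι - 1).choose t := by
    exact_mod_cast Nat.choose_pos (by omega)
  funext b
  rw [Pi.smul_apply, dicke_apply, dicke_apply, weight_insert, card_subtype_ne, smul_eq_mul]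
  by_cases hb : weight b = t
  · have hs : ((√((Fintype.card ι - 1).choose t : ℝ) : ℝ) : ℂ) ≠ 0 := by
      exact_mod_cast (Real.sqrt_pos.2 hC).ne'
    rw [if_pos (by omega), if_pos hb, Real.sqrt_div hC.le]
    push_cast
    field_simp
  · rw [if_neg (by omega), if_neg hb, mul_zero]

theorem avgGGM_dicke_zero_zero {j : ℕ} (r : ι) (hj0 : 0 < j) (hj : j < Fintype.card ι) :
    avgGGM (dicke j) r 0 0 =
      (Fintype.card ι - j) / Fintype.card ι * GGM (dicke j : PureState {i // i ≠ r}) +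
        j / Fintype.card ι * GGM (dicke (j - 1) : PureState {i // i ≠ r}) := by
  have hj0' : (0 : ℝ) < j := by exact_mod_cast hj0
  have hM : (j : ℝ) < Fintype.card ι := by exact_mod_cast hj
  have hup := dicke_insert_eq_smul_dicke (j := j) r 0 hj (by simp)
  have hdn := dicke_insert_eq_smul_dicke (j := j) (t := j - 1) r 1 (by omega) (by simp; omega)
  rw [cast_choose_pred_div_cast_choose hj.le (by omega)] at hup
  rw [cast_choose_pred_pred_div_cast_choose hj0 hj.le] at hdn
  have hcard := card_subtype_ne r
  rw [avgGGM, collapse_xiUp_zero, collapse_xiDn_zero, hup, hdn, nsq_ofReal_smul, nsq_ofReal_smul,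
    normalize_ofReal_smul (Real.sqrt_pos.2 (by apply div_pos <;> linarith)) (nsq_dicke (by omega)),
    normalize_ofReal_smul (Real.sqrt_pos.2 (by apply div_pos <;> linarith)) (nsq_dicke (by omega)),
    nsq_dicke (by omega), nsq_dicke (by omega), Real.sq_sqrt (by apply div_nonneg <;> linarith),
    Real.sq_sqrt (by positivity), mul_one, mul_one]

/-- For even `N > 2` and `1 ≤ k ≤ N/2`, measuring one qubit of `|D_k^N⟩`
in the computational basis gives an average post-measurement GGM equal to
`(N-2)/(2(N-1))` when `k = N/2` and `k/N` when `k < N/2`; in both cases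
this equals the GGM of the original Dicke state. -/
theorem stmt14 (N k : ℕ) (hN : 2 < N) (hNe : Even N) (hk1 : 1 ≤ k)
    (hk2 : 2 * k ≤ N) (r : Fin N) :
    avgGGM (dicke k : PureState (Fin N)) r 0 0 =
      (if 2 * k = N then ((N : ℝ) - 2) / (2 * ((N : ℝ) - 1))
        else (k : ℝ) / N) ∧
    avgGGM (dicke k : PureState (Fin N)) r 0 0 =
      GGM (dicke k : PureState (Fin N)) := by
  have hcard : Fintype.card {i // i ≠ r} = N - 1 := by rw [card_subtype_ne, Fintype.card_fin]
  have hN1 : ((N - 1 : ℕ) : ℝ) = N - 1 := Nat.cast_pred (by omega)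
  have hN1_ne : (N : ℝ) - 1 ≠ 0 := by rw [← hN1]; exact_mod_cast (by omega : N - 1 ≠ 0)
  have havg : avgGGM (dicke k : PureState (Fin N)) r 0 0 =
      if 2 * k = N then ((N : ℝ) - 2) / (2 * ((N : ℝ) - 1)) else (k : ℝ) / N := by
    rw [avgGGM_dicke_zero_zero r hk1 (by simp; omega), Fintype.card_fin,
      GGM_dicke_of_two_mul_lt (j := k - 1) (by omega) (by omega), hcard, hN1, Nat.cast_pred hk1]
    split_ifs with h
    · rw [GGM_dicke_of_lt_two_mul (by omega) (by omega) (by omega), hcard, hN1, ← h]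
      push_cast
      field_simp
      ring
    · rw [GGM_dicke_of_two_mul_lt (by omega) (by obtain ⟨t, ht⟩ := hNe; omega), hcard, hN1]
      field_simp
      ring
  refine ⟨havg, havg.trans ?_⟩
  split_ifs with h
  · rw [GGM_dicke_of_two_mul_eq (by simp; omega) (by simpa), Fintype.card_fin]
  · rw [GGM_dicke_of_two_mul_lt (by simp; omega) (by simp; omega), Fintype.card_fin]

end QI
end
end
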